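/- Let f be a Kneser function of order d≥1 and h(r)=r^s g(r) with s∈(0,∞) and g:(0,∞)→(0,∞) non-decreasing. If 0 < liminf_{r→0} f(r)/h(r) ≤ limsup_{r→0} f(r)/h(r) < ∞, then 0 < liminf_{r→0} f'_+(r)·r/h(r) and limsup_{r→0} f'_−(r)·r/h(r) < ∞. -/

import Mathlib

open Filter Set Topology

/-!
Substituting `u = r ^ d` turns a Kneser function of order `d` into one of order `1`. For an
order-one Kneser function `F`, positivity forces `F` to be non-decreasing and `F u / u` to be
non-increasing, and chaining the Kneser inequality along geometric progressions shows that the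
slope of `F` on `[u, t]` tends to its supremum as `t → u⁺`. So `F'₊(u)` exists and dominates every
such slope; back in `r` this reads `r f'₊(r) ≥ d (f (M r) - f r) / (M ^ d - 1)` for all `M > 1`,
and the gauge comparison makes the right side at least a multiple of `r ^ s g r` once `M` is
large. For the upper bound, `f y ≥ (y / r) ^ d f r` for `y < r` and Bernoulli's inequality give
`f'₋(r) ≤ d f r / r`.
-/

/-- A Kneser function of order `d`. -/
def IsKneser (f : ℝ → ℝ) (d : ℝ) : Prop :=
  (∀ x : ℝ, 0 < x → 0 < f x) ∧
  ∀ a b lam : ℝ, 0 < a → a ≤ b → 1 ≤ lam →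
    f (lam * b) - f (lam * a) ≤ lam ^ d * (f b - f a)

section LiminfLimsup

variable {α : Type*} {l : Filter α} {φ : α → ℝ}

theorem exists_pos_eventually_lt_of_pos_liminf (h : 0 < liminf (fun x => (φ x : EReal)) l) :
    ∃ c > 0, ∀ᶠ x in l, c < φ x := by
  obtain ⟨c, h0c, hc⟩ := EReal.exists_between_coe_real h
  exact ⟨c, EReal.coe_pos.1 h0c,
    (eventually_lt_of_lt_liminf hc).mono fun x hx => EReal.coe_lt_coe_iff.1 hx⟩

theorem exists_eventually_lt_of_limsup_lt_top (h : limsup (fun x => (φ x : EReal)) l < ⊤) :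
    ∃ C : ℝ, ∀ᶠ x in l, φ x < C := by
  obtain ⟨C, hC, -⟩ := EReal.exists_between_coe_real h
  exact ⟨C, (eventually_lt_of_limsup_lt hC).mono fun x hx => EReal.coe_lt_coe_iff.1 hx⟩

theorem pos_liminf_of_eventually_le {c : ℝ} (hc : 0 < c) (h : ∀ᶠ x in l, c ≤ φ x) :
    0 < liminf (fun x => (φ x : EReal)) l :=
  (EReal.coe_pos.2 hc).trans_le <|
    le_liminf_of_le (by isBoundedDefault) (h.mono fun _ hx => EReal.coe_le_coe hx)

theorem limsup_lt_top_of_eventually_le {C : ℝ} (h : ∀ᶠ x in l, φ x ≤ C) :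
    limsup (fun x => (φ x : EReal)) l < ⊤ :=
  (limsup_le_of_le (by isBoundedDefault) (h.mono fun _ hx => EReal.coe_le_coe hx)).trans_lt
    (EReal.coe_lt_top C)

end LiminfLimsup

theorem MonotoneOn.exists_one_lt_mul_le_rpow_mul {g : ℝ → ℝ} {s : ℝ}
    (hg : MonotoneOn g (Ioi 0)) (hg_nonneg : ∀ r, 0 < r → 0 ≤ g r) (hs : 0 < s) (K : ℝ) :
    ∃ M > 1, ∀ r, 0 < r → K * (r ^ s * g r) ≤ (M * r) ^ s * g (M * r) := by
  obtain ⟨M, hMK, hM⟩ :=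
    ((tendsto_rpow_atTop hs).eventually_ge_atTop K |>.and (eventually_gt_atTop 1)).exists
  refine ⟨M, hM, fun r hr => ?_⟩
  have hgr := hg_nonneg r hr
  calc K * (r ^ s * g r) ≤ M ^ s * (r ^ s * g r) := by gcongr
    _ = (M * r) ^ s * g r := by rw [Real.mul_rpow (by positivity) hr.le, mul_assoc]
    _ ≤ (M * r) ^ s * g (M * r) := by
        gcongr
        exact hg hr (mul_pos (by positivity) hr) (le_mul_of_one_le_left hr.le hM.le)

namespace IsKneser

variable {f h : ℝ → ℝ} {d x y ρ : ℝ}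

theorem apply_mul_le (hf : IsKneser f d) (hd : 0 ≤ d) (hx : 0 < x) (hρ : 1 ≤ ρ) :
    f (ρ * x) ≤ ρ ^ d * f x := by
  by_contra! hgap
  set δ := f (ρ * x) - ρ ^ d * f x
  have hδ : 0 < δ := by linarith
  have hρ0 : 0 < ρ := one_pos.trans_le hρ
  -- Kneser on `[x / ρ ^ (n + 1), x]` forces `f (x / ρ ^ n)` to drop by `δ` at each step.
  have hdrop : ∀ n : ℕ, f (x / ρ ^ n) ≤ f x - n * δ := by
    intro n
    induction n with
    | zero => simp
    | succ n ih =>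
      have hK := hf.2 (x / ρ ^ (n + 1)) x ρ (by positivity)
        (div_le_self hx.le (one_le_pow₀ hρ)) hρ
      have hmul : ρ * (x / ρ ^ (n + 1)) = x / ρ ^ n := by
        rw [pow_succ]; field_simp
      have hpos := hf.1 _ (show 0 < x / ρ ^ (n + 1) by positivity)
      have hρd : 1 ≤ ρ ^ d := Real.one_le_rpow hρ hd
      rw [hmul] at hK
      push_cast
      nlinarith
  obtain ⟨n, hn⟩ := exists_nat_gt (f x / δ)
  have := hf.1 _ (show 0 < x / ρ ^ n by positivity)
  have := hdrop n
  rw [div_lt_iff₀ hδ] at hn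
  linarith

theorem antitoneOn_div_rpow (hf : IsKneser f d) (hd : 0 ≤ d) :
    AntitoneOn (fun r => f r / r ^ d) (Ioi 0) := by
  intro x hx y hy hxy
  have hx : 0 < x := hx
  have hy : 0 < y := hy
  have h := hf.apply_mul_le hd hx ((one_le_div hx).2 hxy)
  rw [div_mul_cancel₀ _ hx.ne', Real.div_rpow hy.le hx.le] at h
  have hyd : 0 < y ^ d := by positivity
  calc f y / y ^ d ≤ y ^ d / x ^ d * f x / y ^ d := by gcongr
    _ = f x / x ^ d := by field_simp

theorem sub_le_rpow_pow_mul (hf : IsKneser f d) (hx : 0 < x) (hρ : 1 ≤ ρ) (k : ℕ) :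
    f (ρ ^ (k + 1) * x) - f (ρ ^ k * x) ≤ (ρ ^ d) ^ k * (f (ρ * x) - f x) := by
  have hρ0 : 0 ≤ ρ := zero_le_one.trans hρ
  have h := hf.2 x (ρ * x) (ρ ^ k) hx (le_mul_of_one_le_left hx.le hρ) (one_le_pow₀ hρ)
  rwa [← mul_assoc, ← pow_succ, ← Real.rpow_pow_comm hρ0] at h

theorem sub_le_geom_sum_mul (hf : IsKneser f d) (hx : 0 < x) (hρ : 1 ≤ ρ) (n : ℕ) :
    f (ρ ^ n * x) - f x ≤ (∑ k ∈ Finset.range n, (ρ ^ d) ^ k) * (f (ρ * x) - f x) := by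
  calc f (ρ ^ n * x) - f x = ∑ k ∈ Finset.range n, (f (ρ ^ (k + 1) * x) - f (ρ ^ k * x)) := by
        rw [Finset.sum_range_sub (fun k => f (ρ ^ k * x)), pow_zero, one_mul]
    _ ≤ ∑ k ∈ Finset.range n, (ρ ^ d) ^ k * (f (ρ * x) - f x) :=
        Finset.sum_le_sum fun k _ => hf.sub_le_rpow_pow_mul hx hρ k
    _ = _ := (Finset.sum_mul ..).symm

theorem monotoneOn (hf : IsKneser f d) (hd : 0 ≤ d) : MonotoneOn f (Ioi 0) := by
  intro x hx y _ hxy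
  have hx : 0 < x := hx
  set ρ := y / x
  have hρ : 1 ≤ ρ := (one_le_div hx).2 hxy
  have hy : ρ * x = y := div_mul_cancel₀ _ hx.ne'
  by_contra! hlt
  set A := f (ρ * x) - f x
  have hA : A < 0 := by rw [sub_neg, hy]; exact hlt
  have hclimb : ∀ n : ℕ, f (ρ ^ n * x) ≤ f x + n * A := by
    intro n
    induction n with
    | zero => simp
    | succ n ih =>
      have hstep := hf.sub_le_rpow_pow_mul hx hρ n
      have : 1 ≤ (ρ ^ d) ^ n := one_le_pow₀ (Real.one_le_rpow hρ hd)
      push_cast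
      nlinarith
  obtain ⟨n, hn⟩ := exists_nat_gt (f x / -A)
  have := hf.1 _ (show 0 < ρ ^ n * x by positivity)
  have := hclimb n
  rw [div_lt_iff₀ (neg_pos.2 hA)] at hn
  linarith

theorem comp_rpow_inv (hf : IsKneser f d) (hd : 0 < d) : IsKneser (fun u => f (u ^ d⁻¹)) 1 := by
  refine ⟨fun u hu => hf.1 _ (by positivity), fun a b ρ ha hab hρ => ?_⟩
  have hρ0 : 0 ≤ ρ := zero_le_one.trans hρ
  have h := hf.2 (a ^ d⁻¹) (b ^ d⁻¹) (ρ ^ d⁻¹) (by positivity)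
    (Real.rpow_le_rpow ha.le hab (by positivity)) (Real.one_le_rpow hρ (by positivity))
  simpa only [Real.mul_rpow hρ0 ha.le, Real.mul_rpow hρ0 (ha.le.trans hab),
    Real.rpow_inv_rpow hρ0 hd.ne', Real.rpow_one] using h

theorem sub_le_mul_div (hf : IsKneser f 1) (hx : 0 < x) (hxy : x ≤ y) :
    f y - f x ≤ (y - x) * (f x / x) := by
  have h := hf.antitoneOn_div_rpow zero_le_one (mem_Ioi.2 hx) (mem_Ioi.2 (hx.trans_le hxy)) hxy
  simp only [Real.rpow_one] at h
  rw [div_le_iff₀ (hx.trans_le hxy)] at h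
  have : x * (f x / x) = f x := mul_div_cancel₀ _ hx.ne'
  linarith

theorem bddAbove_slope_image_Ioi (hf : IsKneser f 1) (hx : 0 < x) :
    BddAbove (slope f x '' Ioi x) := by
  refine ⟨f x / x, ?_⟩
  rintro _ ⟨y, hy, rfl⟩
  rw [slope_def_field, div_le_iff₀ (sub_pos.2 hy), mul_comm]
  exact hf.sub_le_mul_div hx (le_of_lt hy)

/-- Chaining the Kneser inequality along the geometric progression `x, ρ x, ρ² x, …` with ratio
`ρ = t / x` compares the slope on `[x, z]` with the one on `[x, t]`, up to the last step,
which is short when `t` is close to `x`. -/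
theorem slope_le_slope_add (hf : IsKneser f 1) (hx : 0 < x) {t z : ℝ} (hxt : x < t)
    (htz : t ≤ z) : slope f x z ≤ slope f x t + z * (t / x - 1) * (f x / x) / (z - x) := by
  set ρ := t / x
  have hρ : 1 < ρ := (one_lt_div hx).2 hxt
  have hρx : ρ * x = t := div_mul_cancel₀ _ hx.ne'
  obtain ⟨n, hn, hn'⟩ := exists_nat_pow_near ((one_le_div hx).2 (hxt.le.trans htz)) hρ
  rw [le_div_iff₀ hx] at hn
  rw [div_lt_iff₀ hx, pow_succ, mul_comm _ ρ, mul_assoc] at hn'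
  set w := ρ ^ n * x
  have hxw : x ≤ w := le_mul_of_one_le_left hx.le (one_le_pow₀ hρ.le)
  have hhead : f w - f x ≤ (w - x) * slope f x t := by
    have h := hf.sub_le_geom_sum_mul hx hρ.le n
    simp only [Real.rpow_one] at h
    have hwx : w - x = (∑ k ∈ Finset.range n, ρ ^ k) * (t - x) := by
      rw [← hρx]
      linear_combination (-x) * geom_sum_mul ρ n
    rw [hwx, slope_def_field, ← hρx, mul_assoc, mul_div_cancel₀ _ (by rw [hρx]; linarith)]
    exact h
  have htail : f z - f w ≤ (z - w) * (f x / x) := by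
    have hw : f w / w ≤ f x / x := by
      simpa only [Real.rpow_one] using
        hf.antitoneOn_div_rpow zero_le_one (mem_Ioi.2 hx) (mem_Ioi.2 (hx.trans_le hxw)) hxw
    exact (hf.sub_le_mul_div (hx.trans_le hxw) hn).trans
      (mul_le_mul_of_nonneg_left hw (sub_nonneg.2 hn))
  have hslope : 0 ≤ slope f x t := by
    rw [slope_def_field]
    exact div_nonneg (sub_nonneg.2 (hf.monotoneOn zero_le_one hx (hx.trans hxt) hxt.le))
      (sub_nonneg.2 hxt.le)
  have hzw : z - w ≤ z * (ρ - 1) := by nlinarith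
  have hfx : 0 ≤ f x / x := div_nonneg (hf.1 x hx).le hx.le
  have key : f z - f x ≤ (z - x) * slope f x t + z * (ρ - 1) * (f x / x) := by
    nlinarith [mul_le_mul_of_nonneg_right hzw hfx,
      mul_le_mul_of_nonneg_right (show w - x ≤ z - x by linarith) hslope]
  have hzx : 0 < z - x := by linarith
  calc slope f x z = (f z - f x) / (z - x) := slope_def_field ..
    _ ≤ ((z - x) * slope f x t + z * (ρ - 1) * (f x / x)) / (z - x) := by gcongr
    _ = _ := by rw [add_div, mul_div_cancel_left₀ _ hzx.ne']

theorem hasDerivWithinAt_Ioi_sSup_slope (hf : IsKneser f 1) (hx : 0 < x) :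
    HasDerivWithinAt f (sSup (slope f x '' Ioi x)) (Ioi x) x := by
  rw [hasDerivWithinAt_iff_tendsto_slope' self_notMem_Ioi, tendsto_order]
  refine ⟨fun a ha => ?_, fun a ha => ?_⟩
  · obtain ⟨_, ⟨z, hz, rfl⟩, haz⟩ :=
      exists_lt_of_lt_csSup ((nonempty_Ioi (a := x)).image _) ha
    have herr : Tendsto (fun t => z * (t / x - 1) * (f x / x) / (z - x)) (𝓝[>] x) (𝓝 0) := by
      refine tendsto_nhdsWithin_of_tendsto_nhds ?_
      have hcont : Continuous fun t => z * (t / x - 1) * (f x / x) / (z - x) := by fun_prop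
      simpa [hx.ne'] using hcont.tendsto x
    filter_upwards [herr.eventually (gt_mem_nhds (sub_pos.2 haz)), Ioc_mem_nhdsGT hz]
      with t hterr ht
    linarith [hf.slope_le_slope_add hx ht.1 ht.2]
  · filter_upwards [self_mem_nhdsWithin] with t ht
    exact (le_csSup (hf.bddAbove_slope_image_Ioi hx) ⟨t, ht, rfl⟩).trans_lt ha

theorem slope_le_derivWithin_Ioi (hf : IsKneser f 1) (hx : 0 < x) (hxy : x < y) :
    slope f x y ≤ derivWithin f (Ioi x) x := by
  rw [(hf.hasDerivWithinAt_Ioi_sSup_slope hx).derivWithin (uniqueDiffWithinAt_Ioi x)]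
  exact le_csSup (hf.bddAbove_slope_image_Ioi hx) ⟨y, hxy, rfl⟩

theorem mul_sub_div_le_derivWithin_Ioi_mul (hf : IsKneser f d) (hd : 0 < d) (hx : 0 < x)
    (hρ : 1 < ρ) : d * (f (ρ * x) - f x) / (ρ ^ d - 1) ≤ derivWithin f (Ioi x) x * x := by
  have hF := hf.comp_rpow_inv hd
  set F' := derivWithin (fun u => f (u ^ d⁻¹)) (Ioi (x ^ d)) (x ^ d)
  have hu : 0 < x ^ d := by positivity
  have hρd : 1 < ρ ^ d := Real.one_lt_rpow hρ hd
  have hFd := (hF.hasDerivWithinAt_Ioi_sSup_slope hu).differentiableWithinAt.hasDerivWithinAt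
  have hpow : HasDerivWithinAt (fun y => y ^ d) (d * x ^ (d - 1)) (Ioi x) x :=
    (Real.hasDerivAt_rpow_const (Or.inl hx.ne')).hasDerivWithinAt
  have hfd : HasDerivWithinAt f (F' * (d * x ^ (d - 1))) (Ioi x) x :=
    (hFd.comp x hpow fun y hy => Real.rpow_lt_rpow hx.le hy hd).congr
      (fun y hy => by simp [Real.rpow_rpow_inv (hx.trans hy).le hd.ne'])
      (by simp [Real.rpow_rpow_inv hx.le hd.ne'])
  have hslope : (f (ρ * x) - f x) / (ρ ^ d - 1) ≤ F' * x ^ d := by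
    have h := hF.slope_le_derivWithin_Ioi hu (lt_mul_of_one_lt_left hu hρd)
    rwa [slope_def_field, ← Real.mul_rpow (by positivity) hx.le,
      Real.rpow_rpow_inv (by positivity) hd.ne', Real.rpow_rpow_inv hx.le hd.ne',
      Real.mul_rpow (by positivity) hx.le, ← sub_one_mul, ← div_div, div_le_iff₀ hu] at h
  rw [hfd.derivWithin (uniqueDiffWithinAt_Ioi x), Real.rpow_sub_one hx.ne']
  calc d * (f (ρ * x) - f x) / (ρ ^ d - 1) ≤ d * (F' * x ^ d) := by
        rw [mul_div_assoc]; gcongr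
    _ = F' * (d * (x ^ d / x)) * x := by field_simp

theorem slope_le_mul_div (hf : IsKneser f d) (hd : 1 ≤ d) (hy : 0 < y) (hyx : y < x) :
    slope f y x ≤ d * f x / x := by
  have hx : 0 < x := hy.trans hyx
  have hfx := hf.1 x hx
  have hanti : (y / x) ^ d * f x ≤ f y := by
    have hyd : 0 < y ^ d := by positivity
    calc (y / x) ^ d * f x = y ^ d * (f x / x ^ d) := by rw [Real.div_rpow hy.le hx.le]; ring
      _ ≤ y ^ d * (f y / y ^ d) := mul_le_mul_of_nonneg_left
          (hf.antitoneOn_div_rpow (zero_le_one.trans hd) (mem_Ioi.2 hy) (mem_Ioi.2 hx) hyx.le)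
          hyd.le
      _ = f y := by field_simp
  have hbern : 1 + d * (y / x - 1) ≤ (y / x) ^ d := by
    simpa using one_add_mul_self_le_rpow_one_add (s := y / x - 1)
      (by linarith [div_pos hy hx]) hd
  have hyx' : y / x * x = y := div_mul_cancel₀ _ hx.ne'
  rw [slope_def_field, div_le_iff₀ (sub_pos.2 hyx)]
  calc f x - f y ≤ f x - (1 + d * (y / x - 1)) * f x := by nlinarith
    _ = d * f x / x * (x - y) := by field_simp; ring

theorem derivWithin_Iio_le (hf : IsKneser f d) (hd : 1 ≤ d) (hx : 0 < x) :
    derivWithin f (Iio x) x ≤ d * f x / x := by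
  by_cases hdiff : DifferentiableWithinAt ℝ f (Iio x) x
  · have hD := hdiff.hasDerivWithinAt
    rw [hasDerivWithinAt_iff_tendsto_slope' self_notMem_Iio] at hD
    refine le_of_tendsto hD ?_
    filter_upwards [Ioo_mem_nhdsLT hx] with y hy
    rw [slope_comm]
    exact hf.slope_le_mul_div hd hy.1 hy.2
  · rw [derivWithin_zero_of_not_differentiableWithinAt hdiff]
    have := hf.1 x hx
    positivity

theorem limsup_derivWithin_Iio_mul_div_lt_top (hf : IsKneser f d) (hd : 1 ≤ d)
    (hh : ∀ r, 0 < r → 0 < h r)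
    (hup : limsup (fun r => ((f r / h r : ℝ) : EReal)) (𝓝[>] 0) < ⊤) :
    limsup (fun r => ((derivWithin f (Iio r) r * r / h r : ℝ) : EReal)) (𝓝[>] 0) < ⊤ := by
  obtain ⟨C, hC⟩ := exists_eventually_lt_of_limsup_lt_top hup
  refine limsup_lt_top_of_eventually_le (C := d * C) ?_
  filter_upwards [hC, self_mem_nhdsWithin] with r hCr (hr : 0 < r)
  have hderiv : derivWithin f (Iio r) r * r ≤ d * f r :=
    (le_div_iff₀ hr).1 (hf.derivWithin_Iio_le hd hr)
  calc derivWithin f (Iio r) r * r / h r ≤ d * f r / h r := by gcongr; exact (hh r hr).le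
    _ = d * (f r / h r) := mul_div_assoc ..
    _ ≤ d * C := by gcongr

theorem liminf_derivWithin_Ioi_mul_div_pos (hf : IsKneser f d) (hd : 0 < d)
    (hh : ∀ r, 0 < r → 0 < h r) (hgrowth : ∀ K, ∃ M > 1, ∀ r, 0 < r → K * h r ≤ h (M * r))
    (hlow : 0 < liminf (fun r => ((f r / h r : ℝ) : EReal)) (𝓝[>] 0))
    (hup : limsup (fun r => ((f r / h r : ℝ) : EReal)) (𝓝[>] 0) < ⊤) :
    0 < liminf (fun r => ((derivWithin f (Ioi r) r * r / h r : ℝ) : EReal)) (𝓝[>] 0) := by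
  obtain ⟨c, hc, hcf⟩ := exists_pos_eventually_lt_of_pos_liminf hlow
  obtain ⟨C, hCf⟩ := exists_eventually_lt_of_limsup_lt_top hup
  -- Choose `M` so that `f (M r) ≥ c h (M r) ≥ (C + c) h r`, which exceeds `f r` by `c h r`.
  obtain ⟨M, hM, hMh⟩ := hgrowth ((C + c) / c)
  have hMd : 0 < M ^ d - 1 := sub_pos.2 (Real.one_lt_rpow hM hd)
  refine pos_liminf_of_eventually_le (c := d * c / (M ^ d - 1)) (by positivity) ?_
  filter_upwards [hCf, eventually_nhdsGT_zero_mul_left (zero_lt_one.trans hM) hcf,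
    self_mem_nhdsWithin] with r hCr hcMr (hr : 0 < r)
  have hhr := hh r hr
  rw [div_lt_iff₀ hhr] at hCr
  rw [lt_div_iff₀ (hh _ (by positivity))] at hcMr
  have hgap : c * h r ≤ f (M * r) - f r := by
    have : (C + c) * h r ≤ c * h (M * r) := by
      calc (C + c) * h r = c * ((C + c) / c * h r) := by field_simp
        _ ≤ c * h (M * r) := by gcongr; exact hMh r hr
    linarith
  rw [le_div_iff₀ hhr]
  calc d * c / (M ^ d - 1) * h r = d * (c * h r) / (M ^ d - 1) := by ring
    _ ≤ d * (f (M * r) - f r) / (M ^ d - 1) := by gcongr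
    _ ≤ derivWithin f (Ioi r) r * r := hf.mul_sub_div_le_derivWithin_Ioi_mul hd hr hM

end IsKneser

theorem kneser_two_sided_gauge (f g : ℝ → ℝ) (d s : ℝ) (hd : 1 ≤ d)
    (hf : IsKneser f d) (hs : 0 < s)
    (hg_pos : ∀ r : ℝ, 0 < r → 0 < g r) (hg_mono : MonotoneOn g (Set.Ioi 0))
    (h1 : 0 < Filter.liminf (fun r : ℝ => ((f r / (r ^ s * g r) : ℝ) : EReal)) (𝓝[>] (0 : ℝ)))
    (h2 : Filter.limsup (fun r : ℝ => ((f r / (r ^ s * g r) : ℝ) : EReal)) (𝓝[>] (0 : ℝ)) < ⊤) :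
    0 < Filter.liminf
        (fun r : ℝ => ((derivWithin f (Set.Ioi r) r * r / (r ^ s * g r) : ℝ) : EReal))
        (𝓝[>] (0 : ℝ)) ∧
      Filter.limsup
        (fun r : ℝ => ((derivWithin f (Set.Iio r) r * r / (r ^ s * g r) : ℝ) : EReal))
        (𝓝[>] (0 : ℝ)) < ⊤ := by
  have hh : ∀ r, 0 < r → 0 < r ^ s * g r := fun r hr =>
    mul_pos (Real.rpow_pos_of_pos hr s) (hg_pos r hr)
  have hgrowth := hg_mono.exists_one_lt_mul_le_rpow_mul (fun r hr => (hg_pos r hr).le) hs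
  exact ⟨hf.liminf_derivWithin_Ioi_mul_div_pos (zero_lt_one.trans_le hd) hh hgrowth h1 h2,
    hf.limsup_derivWithin_Iio_mul_div_lt_top hd hh h2⟩
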